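/- Consider the open embeddings j₁ : ℝⁿ → Sⁿ, j₁(x) = (x, −1)/√(‖x‖² + 1), and j₂ : Sⁿ⁻¹ × ℝ → Sⁿ, j₂(n, r) = (n, r)/√(r² + 1). Then for all x ∈ ℝⁿ, n ∈ Sⁿ⁻¹, r ∈ ℝ: j₁(x)·j₂(n, r) ≤ 0 if and only if x·n ≤ r. Consequently (j₁ × j₂)⁻¹{(u, v) ∈ Sⁿ × Sⁿ : u·v ≤ 0} = {(x, n, r) : x·n ≤ r}. -/
import Mathlib


open scoped RealInnerProductSpace

lemma radon_key (n : ℕ) (x nv : EuclideanSpace ℝ (Fin n)) (r : ℝ)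
    (a b : EuclideanSpace ℝ (Fin n) × ℝ)
    (ha : a = (Real.sqrt (‖x‖ ^ 2 + 1))⁻¹ • ((x, -1) : EuclideanSpace ℝ (Fin n) × ℝ))
    (hb : b = (Real.sqrt (r ^ 2 + 1))⁻¹ • ((nv, r) : EuclideanSpace ℝ (Fin n) × ℝ)) :
    (⟪a.1, b.1⟫ + a.2 * b.2 ≤ 0 ↔ ⟪x, nv⟫ ≤ r) := by
  have hA : (0:ℝ) < Real.sqrt (‖x‖ ^ 2 + 1) :=
    Real.sqrt_pos.2 (by positivity)
  have hB : (0:ℝ) < Real.sqrt (r ^ 2 + 1) :=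
    Real.sqrt_pos.2 (by positivity)
  subst ha hb
  simp only [Prod.smul_fst, Prod.smul_snd, inner_smul_left, inner_smul_right,
    smul_eq_mul, map_inv₀, RCLike.inv_re, Real.sqrt_nonneg, RCLike.normSq_eq_def',
    RCLike.star_def, conj_trivial]
  have : ((Real.sqrt (r ^ 2 + 1))⁻¹ * ((Real.sqrt (‖x‖ ^ 2 + 1))⁻¹ * ⟪x, nv⟫) +
      (Real.sqrt (‖x‖ ^ 2 + 1))⁻¹ * (-1) * ((Real.sqrt (r ^ 2 + 1))⁻¹ * r)) =
      ((Real.sqrt (‖x‖ ^ 2 + 1))⁻¹ * (Real.sqrt (r ^ 2 + 1))⁻¹) * (⟪x, nv⟫ - r) := by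
    ring
  rw [this]
  constructor
  · intro h
    nlinarith [mul_pos (inv_pos.2 hA) (inv_pos.2 hB)]
  · intro h
    have := mul_pos (inv_pos.2 hA) (inv_pos.2 hB)
    nlinarith

/-- The standard inner product on ℝⁿ⁺¹ = ℝⁿ × ℝ, with points written
as pairs (vector in ℝⁿ, last coordinate). -/
noncomputable def dotRn1 (n : ℕ) (a b : EuclideanSpace ℝ (Fin n) × ℝ) : ℝ :=
  ⟪a.1, b.1⟫ + a.2 * b.2

/-- The open embedding j₁ : ℝⁿ → Sⁿ, j₁(x) = (x, −1)/√(‖x‖² + 1). -/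
noncomputable def radonJ1 (n : ℕ) (x : EuclideanSpace ℝ (Fin n)) :
    EuclideanSpace ℝ (Fin n) × ℝ :=
  (Real.sqrt (‖x‖ ^ 2 + 1))⁻¹ • ((x, -1) : EuclideanSpace ℝ (Fin n) × ℝ)

/-- The open embedding j₂ : Sⁿ⁻¹ × ℝ → Sⁿ, j₂(n, r) = (n, r)/√(r² + 1). -/
noncomputable def radonJ2 (n : ℕ) (nv : EuclideanSpace ℝ (Fin n)) (r : ℝ) :
    EuclideanSpace ℝ (Fin n) × ℝ :=
  (Real.sqrt (r ^ 2 + 1))⁻¹ • ((nv, r) : EuclideanSpace ℝ (Fin n) × ℝ)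

/-- j₁(x)·j₂(n, r) ≤ 0 iff x·n ≤ r; consequently the preimage under j₁ × j₂
of {(u, v) ∈ Sⁿ × Sⁿ : u·v ≤ 0} is {(x, n, r) : x·n ≤ r}. -/
theorem radon_kernel_is_restriction (n : ℕ) :
    (∀ (x nv : EuclideanSpace ℝ (Fin n)) (r : ℝ), ‖nv‖ = 1 →
      (dotRn1 n (radonJ1 n x) (radonJ2 n nv r) ≤ 0 ↔ ⟪x, nv⟫ ≤ r)) ∧
    {p : EuclideanSpace ℝ (Fin n) × EuclideanSpace ℝ (Fin n) × ℝ |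
        ‖p.2.1‖ = 1 ∧ dotRn1 n (radonJ1 n p.1) (radonJ2 n p.2.1 p.2.2) ≤ 0} =
      {p : EuclideanSpace ℝ (Fin n) × EuclideanSpace ℝ (Fin n) × ℝ |
        ‖p.2.1‖ = 1 ∧ ⟪p.1, p.2.1⟫ ≤ p.2.2} := by
  have main : ∀ (x nv : EuclideanSpace ℝ (Fin n)) (r : ℝ),
      (dotRn1 n (radonJ1 n x) (radonJ2 n nv r) ≤ 0 ↔ ⟪x, nv⟫ ≤ r) := by
    intro x nv r
    exact radon_key n x nv r _ _ rfl rfl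
  refine ⟨fun x nv r _ => main x nv r, ?_⟩
  ext p
  simp only [Set.mem_setOf_eq, main p.1 p.2.1 p.2.2]
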